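/- arXiv:2303.16693 — 3 statements merged into one kernel-verified Lean document; each statement's English description precedes it below -/
import Mathlib

section
/- Let G be a group of exponent 2^n and let a be an element of G with a^2 = 1. Then for every x in G, the iterated commutator [x, a, a, ..., a] with a repeated n+1 times equals the identity; that is, a is a left (n+1)-Engel element of G. -/
/-- Left-normed group commutator `[x,y] = x⁻¹ y⁻¹ x y`. -/
def bra {G : Type*} [Group G] (x y : G) : G := x⁻¹ * y⁻¹ * x * y

/-- Iterated left-normed commutator: `engel x a n = [x, a, a, ..., a]` with `a` repeated `n` times. -/
def engel {G : Type*} [Group G] (x a : G) : ℕ → G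
  | 0 => x
  | n + 1 => bra (engel x a n) a

lemma bra_bra {G : Type*} [Group G] (y a : G) (ha : a ^ 2 = 1) :
    bra (bra y a) a = (bra y a) ^ (-2 : ℤ) := by
  have hinv : a⁻¹ = a := by
    rw [pow_two] at ha
    exact inv_eq_of_mul_eq_one_left ha
  have haa : a * a = 1 := by rw [← sq]; exact ha
  simp only [bra, hinv]
  rw [show ((-2):ℤ) = -((2:ℕ):ℤ) from rfl, zpow_neg, zpow_natCast, pow_two, mul_inv_rev]
  simp [mul_inv_rev, hinv, mul_assoc, haa]

lemma engel_pow {G : Type*} [Group G] (x a : G) (ha : a ^ 2 = 1) (k : ℕ) :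
    engel x a (k + 1) = (bra x a) ^ ((-2 : ℤ) ^ k) := by
  induction k with
  | zero => simp [engel]
  | succ k ih =>
      show bra (engel x a (k+1)) a = _
      rw [show engel x a (k+1) = bra (engel x a k) a from rfl,
        bra_bra _ _ ha, ← show engel x a (k+1) = bra (engel x a k) a from rfl, ih,
        ← zpow_mul, ← pow_succ]

/-- In a group of exponent `2^n`, any element `a` with `a^2 = 1` is a left `(n+1)`-Engel element. -/
theorem stmt0 {G : Type*} [Group G] (n : ℕ) (hexp : ∀ g : G, g ^ (2 ^ n) = 1)
    (a : G) (ha : a ^ 2 = 1) :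
    ∀ x : G, engel x a (n + 1) = 1 := by
  intro x
  rw [engel_pow x a ha n]
  have h : ((-2 : ℤ) ^ n) = (-1) ^ n * (2 : ℤ) ^ n := by
    rw [← mul_pow]; norm_num
  rw [h, mul_comm, zpow_mul]
  have h2 : (bra x a) ^ ((2 : ℤ) ^ n) = 1 := by
    rw [show ((2:ℤ)^n) = ((2^n : ℕ) : ℤ) by push_cast; ring, zpow_natCast]
    exact hexp _
  rw [h2, one_zpow]
end

section
/- Let L be a Lie algebra over a field of characteristic not equal to 2, and let a ∈ L satisfy [[a,x],a] = 0 for all x ∈ L. Then [[[a,x],y],a] = 0 for all x, y ∈ L. -/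
/-- In a Lie algebra over a field of characteristic ≠ 2, the first sandwich condition
`[[a,x],a] = 0` for all `x` implies the second one `[[[a,x],y],a] = 0` for all `x, y`. -/
theorem stmt2 {k : Type*} [Field k] (hchar : ringChar k ≠ 2)
    {L : Type*} [LieRing L] [LieAlgebra k L]
    (a : L) (h : ∀ x : L, ⁅⁅a, x⁆, a⁆ = 0) :
    ∀ x y : L, ⁅⁅⁅a, x⁆, y⁆, a⁆ = 0 := by
  -- Key relation: ⁅⁅⁅a,u⁆,v⁆,a⁆ = ⁅⁅a,v⁆,⁅a,u⁆⁆
  have Trel : ∀ u v : L, ⁅⁅⁅a, u⁆, v⁆, a⁆ = ⁅⁅a, v⁆, ⁅a, u⁆⁆ := by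
    intro u v
    have h1 : ⁅⁅v, ⁅a, u⁆⁆, a⁆ + ⁅⁅a, u⁆, ⁅v, a⁆⁆ = 0 := by
      rw [← leibniz_lie, h u, lie_zero]
    have e1 : ⁅⁅v, ⁅a, u⁆⁆, a⁆ = -⁅⁅⁅a, u⁆, v⁆, a⁆ := by
      rw [← lie_skew v ⁅a, u⁆, neg_lie]
    have e2 : ⁅⁅a, u⁆, ⁅v, a⁆⁆ = ⁅⁅a, v⁆, ⁅a, u⁆⁆ := by
      rw [← lie_skew v a, lie_neg, ← lie_skew ⁅a, v⁆ ⁅a, u⁆]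
    rw [e1, e2, neg_add_eq_zero] at h1
    exact h1
  -- Symmetry: T(x,y) = T(y,x)
  have Tsym : ∀ u v : L, ⁅⁅⁅a, u⁆, v⁆, a⁆ = ⁅⁅⁅a, v⁆, u⁆, a⁆ := by
    intro u v
    have h1 : ⁅⁅⁅a, u⁆, v⁆ + ⁅u, ⁅a, v⁆⁆, a⁆ = 0 := by
      rw [← leibniz_lie, h ⁅u, v⁆]
    rw [add_lie] at h1
    have e1 : ⁅⁅u, ⁅a, v⁆⁆, a⁆ = -⁅⁅⁅a, v⁆, u⁆, a⁆ := by
      rw [← lie_skew u ⁅a, v⁆, neg_lie]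
    rw [e1, add_neg_eq_zero] at h1
    exact h1
  intro x y
  have T1 := Trel x y
  have T2 := Trel y x
  have T3 := Tsym x y
  have hanti : ⁅⁅⁅a, x⁆, y⁆, a⁆ = -⁅⁅⁅a, y⁆, x⁆, a⁆ := by
    rw [T1, T2, ← lie_skew ⁅a, x⁆ ⁅a, y⁆, neg_neg]
  have h2 : (2 : k) • ⁅⁅⁅a, x⁆, y⁆, a⁆ = 0 := by
    rw [two_smul]
    nth_rewrite 1 [hanti]
    rw [← T3, neg_add_cancel]
  rcases smul_eq_zero.mp h2 with h0 | h0
  · exact absurd h0 (Ring.two_ne_zero hchar)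
  · exact h0
end

section
/- Let G be a group and a ∈ G an element such that ⟨a, a^g⟩ is nilpotent of class at most 2 for every g ∈ G. Then a is a left 3-Engel element of G, i.e., [x, a, a, a] = 1 for all x ∈ G. -/
/-- Conjugation `g^h = h⁻¹ g h`. -/
def cnj {G : Type*} [Group G] (g h : G) : G := h⁻¹ * g * h

/-- A subgroup is nilpotent of class at most `n`. -/
def NilClassLe {G : Type*} [Group G] (H : Subgroup G) (n : ℕ) : Prop :=
  upperCentralSeries H n = ⊤

/-!
Since `[x, a] = (a^x)⁻¹ a` lies in `H = ⟨a, a^x⟩`, the element `[x, a, a]` is a commutator of two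
elements of `H`. In a group of class at most 2 commutators are central, so `[x, a, a]` commutes
with `a`, i.e. `[x, a, a, a] = 1`.
-/

section

open scoped commutatorElement

variable {G : Type*} [Group G]

theorem bra_eq_commutatorElement (x y : G) : bra x y = ⁅x⁻¹, y⁻¹⁆ := by
  simp only [bra, commutatorElement_def, inv_inv]

theorem bra_eq_one_of_mem_center {z : G} (hz : z ∈ Subgroup.center G) (y : G) : bra z y = 1 := by
  rw [bra, mul_assoc _ z, ← Subgroup.mem_center_iff.mp hz y]
  group

theorem bra_mem_center_of_upperCentralSeries_two_eq_top
    (h : Subgroup.upperCentralSeries G 2 = ⊤) (x y : G) : bra x y ∈ Subgroup.center G := by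
  have hx : x⁻¹ ∈ Subgroup.upperCentralSeries G (1 + 1) := h ▸ Subgroup.mem_top _
  rw [bra_eq_commutatorElement, ← Subgroup.upperCentralSeries_one]
  exact Subgroup.mem_upperCentralSeries_succ_iff.mp hx y⁻¹

theorem bra_bra_eq_one_of_upperCentralSeries_two_eq_top
    (h : Subgroup.upperCentralSeries G 2 = ⊤) (x y z : G) : bra (bra x y) z = 1 :=
  bra_eq_one_of_mem_center (bra_mem_center_of_upperCentralSeries_two_eq_top h x y) z

theorem bra_mem_closure_pair_cnj (x a : G) : bra x a ∈ Subgroup.closure {a, cnj a x} := by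
  have hba : bra x a = (cnj a x)⁻¹ * a := by simp only [bra, cnj]; group
  rw [hba]
  exact mul_mem (inv_mem (Subgroup.subset_closure (by simp))) (Subgroup.subset_closure (by simp))

theorem bra_bra_bra_eq_one_of_nilClassLe_two {a x : G}
    (h : NilClassLe (Subgroup.closure {a, cnj a x}) 2) : bra (bra (bra x a) a) a = 1 := by
  set H := Subgroup.closure {a, cnj a x}
  have ha : a ∈ H := Subgroup.subset_closure (by simp)
  have key := bra_bra_eq_one_of_upperCentralSeries_two_eq_top h
    ⟨bra x a, bra_mem_closure_pair_cnj x a⟩ ⟨a, ha⟩ ⟨a, ha⟩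
  simpa only [bra, Subgroup.coe_mul, Subgroup.coe_inv, OneMemClass.coe_one]
    using congrArg Subtype.val key

end

/-- If `⟨a, a^g⟩` is nilpotent of class at most 2 for all `g`, then `a` is a
left 3-Engel element. -/
theorem stmt10 {G : Type*} [Group G] (a : G)
    (h : ∀ g : G, NilClassLe (Subgroup.closure {a, cnj a g}) 2) :
    ∀ x : G, bra (bra (bra x a) a) a = 1 :=
  fun x => bra_bra_bra_eq_one_of_nilClassLe_two (h x)
end
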